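/- Let W : ℕ → A be a uniformly recurrent infinite word over a finite alphabet A that is not eventually periodic. Then: (1) every infinite word V : ℕ → A with F(V) = F(W) is uniformly recurrent; and (2) the set {V : ℕ → A | F(V) = F(W)} of words equivalent to W is uncountable. -/
import Mathlib

/-- The finite word `u` occurs in the infinite word `W` at position `i`. -/
def occursAt {A : Type*} (W : ℕ → A) (u : List A) (i : ℕ) : Prop :=
  u = (List.range u.length).map (fun j => W (i + j))

/-- `u` is a factor (subword) of the infinite word `W`. -/
def IsFactor {A : Type*} (W : ℕ → A) (u : List A) : Prop :=
  ∃ i, occursAt W u i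

/-- The set of factors of `W`. -/
def Factors {A : Type*} (W : ℕ → A) : Set (List A) :=
  {u | IsFactor W u}

/-- `W` is uniformly recurrent: for every factor `v` there exists `N` such that
every factor of `W` of length `N` contains `v` as a factor. -/
def UniformlyRecurrent {A : Type*} (W : ℕ → A) : Prop :=
  ∀ v, IsFactor W v → ∃ N : ℕ, ∀ u, IsFactor W u → u.length = N → v <:+: u

/-- `W` is eventually periodic. -/
def EventuallyPeriodic {A : Type*} (W : ℕ → A) : Prop :=
  ∃ p, 1 ≤ p ∧ ∃ N, ∀ n, N ≤ n → W (n + p) = W n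

namespace URAux

variable {A : Type*}

/-- The segment of `W` of length `n` starting at `i`. -/
def seg (W : ℕ → A) (i n : ℕ) : List A := (List.range n).map (fun j => W (i + j))

@[simp] lemma seg_length (W : ℕ → A) (i n : ℕ) : (seg W i n).length = n := by
  simp [seg]

lemma seg_getElem (W : ℕ → A) {i n j : ℕ} (h : j < n) :
    (seg W i n)[j]'(by simpa using h) = W (i + j) := by
  simp [seg]

lemma occursAt_iff (W : ℕ → A) (u : List A) (i : ℕ) :
    occursAt W u i ↔ u = seg W i u.length := Iff.rfl

lemma isFactor_seg (W : ℕ → A) (i n : ℕ) : IsFactor W (seg W i n) :=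
  ⟨i, by rw [occursAt_iff, seg_length]⟩

lemma isFactor_nil (W : ℕ → A) : IsFactor W [] := ⟨0, by simp [occursAt]⟩

lemma seg_append (W : ℕ → A) (i m n : ℕ) :
    seg W i (m + n) = seg W i m ++ seg W (i + m) n := by
  simp only [seg, List.range_add, List.map_append, List.map_map]
  congr 1
  apply List.map_congr_left
  intro j _
  simp [Function.comp, add_assoc]

lemma seg_prefix (W : ℕ → A) {m n : ℕ} (i : ℕ) (h : m ≤ n) :
    seg W i m <+: seg W i n := by
  refine ⟨seg W (i + m) (n - m), ?_⟩
  rw [← seg_append, Nat.add_sub_cancel' h]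

lemma seg_suffix (W : ℕ → A) (i n : ℕ) :
    seg W i n <:+ seg W 0 (i + n) := by
  refine ⟨seg W 0 i, ?_⟩
  rw [seg_append, Nat.zero_add]

/-- an infix of a segment is a segment. -/
lemma infix_seg (W : ℕ → A) {v : List A} {i n : ℕ} (h : v <:+: seg W i n) :
    ∃ k, v = seg W (i + k) v.length := by
  obtain ⟨s, t, hst⟩ := h
  refine ⟨s.length, ?_⟩
  have h1 : (seg W i n).drop s.length = v ++ t := by
    rw [← hst, List.append_assoc, List.drop_left]
  have hlen : s.length + (v.length + t.length) = n := by
    have := congrArg List.length hst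
    simpa [seg_length] using this
  have h2 : seg W i n = seg W i s.length ++ seg W (i + s.length) (v.length + t.length) := by
    rw [← seg_append, hlen]
  have h3 : (seg W i n).drop s.length = seg W (i + s.length) (v.length + t.length) := by
    rw [h2, List.drop_left' (seg_length W i s.length)]
  have h4 : v ++ t = seg W (i + s.length) v.length ++ seg W (i + s.length + v.length) t.length := by
    rw [← h1, h3, seg_append]
  exact List.append_inj_left h4 (by simp)

lemma isFactor_infix {W : ℕ → A} {u v : List A} (hu : IsFactor W u) (h : v <:+: u) :
    IsFactor W v := by
  obtain ⟨i, hi⟩ := hu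
  rw [occursAt_iff] at hi
  obtain ⟨k, hk⟩ := infix_seg W (hi ▸ h)
  exact ⟨i + k, hk⟩

/-- occurrences at arbitrarily large positions -/
lemma occurs_ge {W : ℕ → A} (hUR : UniformlyRecurrent W) {v : List A}
    (hv : IsFactor W v) (M : ℕ) : ∃ i, M ≤ i ∧ v = seg W i v.length := by
  obtain ⟨N, hN⟩ := hUR v hv
  have hu := hN (seg W M N) (isFactor_seg W M N) (seg_length W M N)
  obtain ⟨k, hk⟩ := infix_seg W hu
  exact ⟨M + k, Nat.le_add_right _ _, hk⟩

lemma ep_of_agree {W : ℕ → A} {i j : ℕ} (hij : i < j) (h : ∀ k, W (i + k) = W (j + k)) :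
    EventuallyPeriodic W := by
  refine ⟨j - i, by omega, i, fun n hn => ?_⟩
  have h1 : n + (j - i) = j + (n - i) := by omega
  have h2 : n = i + (n - i) := by omega
  rw [h1, ← h (n - i), ← h2]

/-- The splitting lemma: every factor extends to a right-special factor. -/
lemma exists_rs {W : ℕ → A} (hUR : UniformlyRecurrent W) (hnp : ¬ EventuallyPeriodic W)
    (u : List A) (hu : IsFactor W u) :
    ∃ v, u <+: v ∧ IsFactor W v ∧
      ∃ a b : A, a ≠ b ∧ IsFactor W (v ++ [a]) ∧ IsFactor W (v ++ [b]) := by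
  by_contra hcon
  push_neg at hcon
  -- unique extension: any two extending factors of the same length are equal
  have key : ∀ m : ℕ, ∀ v₁ v₂ : List A, IsFactor W v₁ → IsFactor W v₂ →
      u <+: v₁ → u <+: v₂ → v₁.length = u.length + m → v₂.length = u.length + m →
      v₁ = v₂ := by
    intro m
    induction m with
    | zero =>
      intro v₁ v₂ _ _ h1 h2 hl1 hl2
      have e1 : u = v₁ := h1.eq_of_length (by omega)
      have e2 : u = v₂ := h2.eq_of_length (by omega)
      rw [← e1, ← e2]
    | succ m ih =>
      intro v₁ v₂ hf1 hf2 h1 h2 hl1 hl2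
      have hne1 : v₁ ≠ [] := by
        intro h; rw [h] at hl1; simp only [List.length_nil] at hl1; omega
      have hne2 : v₂ ≠ [] := by
        intro h; rw [h] at hl2; simp only [List.length_nil] at hl2; omega
      have hd1 : v₁.dropLast ++ [v₁.getLast hne1] = v₁ := List.dropLast_append_getLast hne1
      have hd2 : v₂.dropLast ++ [v₂.getLast hne2] = v₂ := List.dropLast_append_getLast hne2
      have hdl1 : v₁.dropLast.length = u.length + m := by
        rw [List.length_dropLast]; omega
      have hdl2 : v₂.dropLast.length = u.length + m := by
        rw [List.length_dropLast]; omega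
      have hp1 : u <+: v₁.dropLast :=
        List.prefix_of_prefix_length_le h1 (List.dropLast_prefix v₁) (by omega)
      have hp2 : u <+: v₂.dropLast :=
        List.prefix_of_prefix_length_le h2 (List.dropLast_prefix v₂) (by omega)
      have hfd1 : IsFactor W v₁.dropLast := isFactor_infix hf1 (List.dropLast_prefix v₁).isInfix
      have hfd2 : IsFactor W v₂.dropLast := isFactor_infix hf2 (List.dropLast_prefix v₂).isInfix
      have heq : v₁.dropLast = v₂.dropLast := ih _ _ hfd1 hfd2 hp1 hp2 hdl1 hdl2
      have hab : v₁.getLast hne1 = v₂.getLast hne2 := by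
        by_contra hne
        exact hcon v₁.dropLast hp1 hfd1 _ _ hne (by rw [hd1]; exact hf1)
          (by rw [heq, hd2]; exact hf2)
      rw [← hd1, ← hd2, heq, hab]
  -- two occurrences of u
  obtain ⟨i, hi⟩ := id hu
  rw [occursAt_iff] at hi
  obtain ⟨j, hj, hj2⟩ := occurs_ge hUR hu (i + 1)
  have hij : i < j := hj
  apply hnp
  apply ep_of_agree hij
  intro k
  have hv1 : seg W i (u.length + (k + 1)) = seg W j (u.length + (k + 1)) := by
    apply key (k + 1) _ _ (isFactor_seg W _ _) (isFactor_seg W _ _)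
    · conv_lhs => rw [hi]
      exact seg_prefix W i (by omega)
    · conv_lhs => rw [hj2]
      exact seg_prefix W j (by omega)
    · simp
    · simp
  have hk : k < u.length + (k + 1) := by omega
  have e1 : (seg W i (u.length + (k + 1))).getD k (W 0) = W (i + k) := by
    rw [List.getD_eq_getElem _ _ (by simpa using hk)]
    exact seg_getElem W hk
  have e2 : (seg W j (u.length + (k + 1))).getD k (W 0) = W (j + k) := by
    rw [List.getD_eq_getElem _ _ (by simpa using hk)]
    exact seg_getElem W hk
  rw [← e1, ← e2, hv1]

/-- A right-special node: a factor with two distinct one-letter extensions. -/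
structure Node (W : ℕ → A) where
  val : List A
  fac : IsFactor W val
  a : A
  b : A
  hab : a ≠ b
  fa : IsFactor W (val ++ [a])
  fb : IsFactor W (val ++ [b])

def Node.letter {W : ℕ → A} (x : Node W) (c : Bool) : A := if c then x.a else x.b

lemma Node.letter_factor {W : ℕ → A} (x : Node W) (c : Bool) :
    IsFactor W (x.val ++ [x.letter c]) := by
  cases c <;> simp [Node.letter, x.fa, x.fb]

lemma Node.letter_ne {W : ℕ → A} (x : Node W) {c d : Bool} (h : c ≠ d) :
    x.letter c ≠ x.letter d := by
  cases c <;> cases d <;> simp_all [Node.letter]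
  · exact x.hab.symm
  · exact x.hab

/-- Splitting lemma in terms of nodes. -/
lemma exists_node {W : ℕ → A} (hUR : UniformlyRecurrent W) (hnp : ¬ EventuallyPeriodic W)
    (u : List A) (hu : IsFactor W u) : ∃ x : Node W, u <+: x.val := by
  obtain ⟨v, hpre, hf, a, b, hab, fa, fb⟩ := exists_rs hUR hnp u hu
  exact ⟨⟨v, hf, a, b, hab, fa, fb⟩, hpre⟩

variable {W : ℕ → A}

/-- The chain of nodes along a binary sequence. -/
noncomputable def chain (hS : ∀ u, IsFactor W u → ∃ x : Node W, u <+: x.val)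
    (σ : ℕ → Bool) : ℕ → Node W
  | 0 => (hS [] (isFactor_nil W)).choose
  | n + 1 =>
      (hS ((chain hS σ n).val ++ [(chain hS σ n).letter (σ n)])
        ((chain hS σ n).letter_factor (σ n))).choose

lemma chain_step (hS : ∀ u, IsFactor W u → ∃ x : Node W, u <+: x.val)
    (σ : ℕ → Bool) (n : ℕ) :
    (chain hS σ n).val ++ [(chain hS σ n).letter (σ n)] <+: (chain hS σ (n + 1)).val :=
  (hS _ ((chain hS σ n).letter_factor (σ n))).choose_spec

lemma chain_mono_succ (hS : ∀ u, IsFactor W u → ∃ x : Node W, u <+: x.val)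
    (σ : ℕ → Bool) (n : ℕ) : (chain hS σ n).val <+: (chain hS σ (n + 1)).val :=
  ((List.prefix_append _ _).trans (chain_step hS σ n))

lemma chain_mono (hS : ∀ u, IsFactor W u → ∃ x : Node W, u <+: x.val)
    (σ : ℕ → Bool) {m n : ℕ} (h : m ≤ n) :
    (chain hS σ m).val <+: (chain hS σ n).val := by
  induction n with
  | zero => simp [Nat.le_zero.mp h]
  | succ n ih =>
    rcases Nat.lt_or_ge m (n + 1) with h' | h'
    · exact (ih (by omega)).trans (chain_mono_succ hS σ n)
    · have : m = n + 1 := by omega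
      simp [this]

lemma chain_length (hS : ∀ u, IsFactor W u → ∃ x : Node W, u <+: x.val)
    (σ : ℕ → Bool) (n : ℕ) : n ≤ (chain hS σ n).val.length := by
  induction n with
  | zero => exact Nat.zero_le _
  | succ n ih =>
    have h := (chain_step hS σ n).length_le
    simp only [List.length_append, List.length_cons, List.length_nil] at h
    omega

lemma chain_congr (hS : ∀ u, IsFactor W u → ∃ x : Node W, u <+: x.val)
    {σ τ : ℕ → Bool} {n : ℕ} (h : ∀ i < n, σ i = τ i) :
    chain hS σ n = chain hS τ n := by
  induction n with
  | zero => rfl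
  | succ n ih =>
    have h1 : chain hS σ n = chain hS τ n := ih (fun i hi => h i (by omega))
    have h2 : σ n = τ n := h n (by omega)
    have key : ∀ (x y : Node W) (c d : Bool), x = y → c = d →
        (hS (x.val ++ [x.letter c]) (x.letter_factor c)).choose =
        (hS (y.val ++ [y.letter d]) (y.letter_factor d)).choose := by
      rintro x y c d rfl rfl; rfl
    simp only [chain]
    exact key _ _ _ _ h1 h2

/-- The word associated to a binary sequence. -/
noncomputable def word (hS : ∀ u, IsFactor W u → ∃ x : Node W, u <+: x.val)
    (σ : ℕ → Bool) (n : ℕ) : A :=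
  (chain hS σ (n + 1)).val.getD n (W 0)

lemma getD_prefix {l₁ l₂ : List A} (h : l₁ <+: l₂) {n : ℕ} (hn : n < l₁.length) (d : A) :
    l₁.getD n d = l₂.getD n d := by
  obtain ⟨t, rfl⟩ := h
  rw [List.getD_eq_getElem _ _ hn, List.getD_eq_getElem _ _ (by simp; omega),
    List.getElem_append_left hn]

lemma word_eq (hS : ∀ u, IsFactor W u → ∃ x : Node W, u <+: x.val)
    (σ : ℕ → Bool) {n m : ℕ} (h : n < (chain hS σ m).val.length) :
    word hS σ n = (chain hS σ m).val.getD n (W 0) := by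
  rcases le_or_gt (n + 1) m with h' | h'
  · exact getD_prefix (chain_mono hS σ h') (lt_of_lt_of_le (Nat.lt_succ_self n) (chain_length hS σ (n+1))) _
  · exact (getD_prefix (chain_mono hS σ (by omega : m ≤ n + 1)) h _).symm

lemma seg_word (hS : ∀ u, IsFactor W u → ∃ x : Node W, u <+: x.val)
    (σ : ℕ → Bool) (n : ℕ) :
    seg (word hS σ) 0 n = (chain hS σ n).val.take n := by
  apply List.ext_getElem
  · simp [Nat.min_eq_left (chain_length hS σ n)]
  · intro j h1 h2
    have hj : j < n := by simpa using h1
    have hjl : j < (chain hS σ n).val.length := lt_of_lt_of_le hj (chain_length hS σ n)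
    rw [seg_getElem (word hS σ) hj, List.getElem_take]
    rw [show (0 : ℕ) + j = j by omega]
    rw [word_eq hS σ hjl, List.getD_eq_getElem _ _ hjl]

lemma seg_word_factor (hS : ∀ u, IsFactor W u → ∃ x : Node W, u <+: x.val)
    (σ : ℕ → Bool) (n : ℕ) : IsFactor W (seg (word hS σ) 0 n) := by
  rw [seg_word]
  exact isFactor_infix (chain hS σ n).fac (List.take_prefix _ _).isInfix

lemma factors_word (hUR : UniformlyRecurrent W)
    (hS : ∀ u, IsFactor W u → ∃ x : Node W, u <+: x.val) (σ : ℕ → Bool) :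
    Factors (word hS σ) = Factors W := by
  ext v
  constructor
  · intro hv
    obtain ⟨i, hi⟩ := hv
    rw [occursAt_iff] at hi
    have hinf : v <:+: seg (word hS σ) 0 (i + v.length) := by
      conv_lhs => rw [hi]
      exact (seg_suffix (word hS σ) i v.length).isInfix
    exact isFactor_infix (seg_word_factor hS σ (i + v.length)) hinf
  · intro hv
    obtain ⟨N, hN⟩ := hUR v hv
    have h1 : v <:+: seg (word hS σ) 0 N :=
      hN _ (seg_word_factor hS σ N) (seg_length _ _ _)
    exact isFactor_infix (isFactor_seg (word hS σ) 0 N) h1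

lemma word_at_branch (hS : ∀ u, IsFactor W u → ∃ x : Node W, u <+: x.val)
    (σ : ℕ → Bool) (n : ℕ) :
    word hS σ ((chain hS σ n).val.length) = (chain hS σ n).letter (σ n) := by
  have hpre := chain_step hS σ n
  have hlen : (chain hS σ n).val.length < (chain hS σ (n + 1)).val.length := by
    have := hpre.length_le
    simp only [List.length_append, List.length_cons, List.length_nil] at this
    omega
  rw [word_eq hS σ hlen, ← getD_prefix hpre (by simp) (W 0)]
  rw [List.getD_eq_getElem _ _ (by simp)]
  simp

lemma word_injective (hS : ∀ u, IsFactor W u → ∃ x : Node W, u <+: x.val) :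
    Function.Injective (word hS) := by
  intro σ τ h
  by_contra hne
  have hex : ∃ n, σ n ≠ τ n := by
    by_contra hc
    push_neg at hc
    exact hne (funext hc)
  classical
  let n := Nat.find hex
  have hn : σ n ≠ τ n := Nat.find_spec hex
  have hmin : ∀ i < n, σ i = τ i := fun i hi => by
    by_contra hci
    exact Nat.find_min hex hi hci
  have hcc : chain hS σ n = chain hS τ n := chain_congr hS hmin
  have h1 := word_at_branch hS σ n
  have h2 := word_at_branch hS τ n
  rw [h] at h1
  rw [← hcc] at h2
  rw [h1] at h2
  exact (chain hS σ n).letter_ne hn h2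

end URAux

/-- For a uniformly recurrent non-(eventually-)periodic word `W`: every word with
the same set of factors is uniformly recurrent, and the set of such words is
uncountable. -/
theorem equivalent_words_ur_and_uncountable {A : Type*} [Fintype A] (W : ℕ → A)
    (hUR : UniformlyRecurrent W) (hnp : ¬ EventuallyPeriodic W) :
    (∀ V : ℕ → A, Factors V = Factors W → UniformlyRecurrent V) ∧
    ¬ (Set.Countable {V : ℕ → A | Factors V = Factors W}) := by
  constructor
  · intro V hV v hv
    have hv' : IsFactor W v := by
      have : v ∈ Factors W := hV ▸ (hv : v ∈ Factors V)
      exact this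
    obtain ⟨N, hN⟩ := hUR v hv'
    refine ⟨N, fun u hu hlen => ?_⟩
    have hu' : IsFactor W u := by
      have : u ∈ Factors W := hV ▸ (hu : u ∈ Factors V)
      exact this
    exact hN u hu' hlen
  · intro hcount
    have hS : ∀ u, IsFactor W u → ∃ x : URAux.Node W, u <+: x.val :=
      fun u hu => URAux.exists_node hUR hnp u hu
    have hrange : ∀ σ : ℕ → Bool, URAux.word hS σ ∈ {V : ℕ → A | Factors V = Factors W} :=
      fun σ => URAux.factors_word hUR hS σ
    have hpre : (URAux.word hS ⁻¹' {V : ℕ → A | Factors V = Factors W}).Countable :=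
      hcount.preimage (URAux.word_injective hS)
    have huniv : (URAux.word hS ⁻¹' {V : ℕ → A | Factors V = Factors W}) = Set.univ := by
      ext σ
      simp only [Set.mem_preimage, Set.mem_univ, iff_true]
      exact hrange σ
    rw [huniv] at hpre
    have hcb : Countable (ℕ → Bool) := Set.countable_univ_iff.mp hpre
    have e : Set ℕ ≃ (ℕ → Bool) := Equiv.arrowCongr (Equiv.refl ℕ) (Equiv.propEquivBool)
    have hcs : Countable (Set ℕ) := Countable.of_equiv _ e.symm
    obtain ⟨f, hf⟩ := exists_injective_nat (Set ℕ)
    exact Function.cantor_injective f hf
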